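/- Let H : (ℂ*)ⁿ → (0,∞) be a C² function such that log H is plurisubharmonic (equivalently, the curvature form ρ = i∂∂̄(−log H) of the Hermitian metric on the trivialized anti-canonical bundle of (ℂ*)ⁿ with H = |∂θ_1 ∧ … ∧ ∂θ_n|² satisfies ρ ≤ 0). Then the J-volume of the canonical n-tori, V(x) := ∫_{[0,2π]^n} √(H(e^{x_1 + iθ_1}, …, e^{x_n + iθ_n})) dθ, is a convex function of x ∈ ℝⁿ. -/

import Mathlib

open MeasureTheory

/-- The Levi form of a real-valued `C²` function `f` on an open set `s ⊆ ℂⁿ` at the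
point `p`, evaluated on the vector `v`: for `f` real-valued this equals
`∑_{j,k} (∂²f/∂z_j∂z̄_k)(p) v_j conj(v_k)`, expressed via the real second
derivative as `(1/4)(D²f(v,v) + D²f(i•v, i•v))`. -/
noncomputable def leviFormWithin (n : ℕ) (f : (Fin n → ℂ) → ℝ) (s : Set (Fin n → ℂ))
    (p v : Fin n → ℂ) : ℝ :=
  (1 / 4) * (iteratedFDerivWithin ℝ 2 f s p ![v, v] +
    iteratedFDerivWithin ℝ 2 f s p ![Complex.I • v, Complex.I • v])

/-- A `C²` function on an open set `s ⊆ ℂⁿ` is plurisubharmonic on `s` if its Levi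
form is positive semidefinite at every point of `s`. -/
def PlurisubharmonicOn (n : ℕ) (f : (Fin n → ℂ) → ℝ) (s : Set (Fin n → ℂ)) : Prop :=
  ∀ p ∈ s, ∀ v : Fin n → ℂ, 0 ≤ leviFormWithin n f s p v

open Real Set Pointwise

noncomputable section


lemma box_translate {n : ℕ} (f : (Fin n → ℝ) → ℝ)
    (hper : ∀ (j : Fin n) (θ : Fin n → ℝ), f (θ + (2 * π) • (Pi.single j 1 : Fin n → ℝ)) = f θ)
    (c : Fin n → ℝ) :
    (∫ θ in Set.univ.pi fun _ : Fin n => Set.Icc (0:ℝ) (2*π), f (c + θ)) =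
      ∫ θ in Set.univ.pi fun _ : Fin n => Set.Icc (0:ℝ) (2*π), f θ := by
  have h2π : (2 * π : ℝ) ≠ 0 := by positivity
  set fe : (Fin n → ℝ) ≃ₗ[ℝ] (Fin n → ℝ) := LinearEquiv.smulOfNeZero ℝ _ _ h2π with hfe
  have hfeap : ∀ y : Fin n → ℝ, fe y = (2*π) • y := fun y => rfl
  set b : Module.Basis (Fin n) ℝ (Fin n → ℝ) := (Pi.basisFun ℝ (Fin n)).map fe with hb
  have hFD : ZSpan.fundamentalDomain b = Set.univ.pi fun _ : Fin n => Set.Ico (0:ℝ) (2*π) := by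
    rw [hb, ← ZSpan.map_fundamentalDomain, ZSpan.fundamentalDomain_pi_basisFun]
    ext x
    simp only [Set.mem_image, Set.mem_pi, Set.mem_univ, forall_true_left, Set.mem_Ico]
    constructor
    · rintro ⟨y, hy, rfl⟩ i
      obtain ⟨h0, h1⟩ := hy i
      rw [hfeap]
      simp only [Pi.smul_apply, smul_eq_mul]
      constructor
      · positivity
      · calc (2*π) * y i < (2*π) * 1 := mul_lt_mul_of_pos_left h1 (by positivity)
          _ = 2*π := by ring
    · intro hx
      refine ⟨(2*π)⁻¹ • x, fun i => ?_, ?_⟩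
      · simp only [Pi.smul_apply, smul_eq_mul]
        constructor
        · have := (hx i).1; positivity
        · rw [inv_mul_lt_iff₀ (by positivity), mul_one]; exact (hx i).2
      · rw [hfeap, smul_smul, mul_inv_cancel₀ h2π, one_smul]
  set L := Submodule.span ℤ (Set.range ⇑b) with hL
  have hfd1 : IsAddFundamentalDomain ↥L (Set.univ.pi fun _ : Fin n => Set.Ico (0:ℝ) (2*π)) volume := by
    rw [← hFD]; exact ZSpan.isAddFundamentalDomain b volume
  haveI : VAddCommClass (Fin n → ℝ) ↥L (Fin n → ℝ) := by
    constructor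
    intro a g x
    show a + (↑g + x) = ↑g + (a + x)
    abel
  haveI : MeasurableVAdd ↥L (Fin n → ℝ) := by
    exact
      { measurable_const_vadd := fun g => measurable_id.const_add (g : Fin n → ℝ)
        measurable_vadd_const := fun a => measurable_subtype_coe.add_const a }
  haveI : VAddInvariantMeasure ↥L (Fin n → ℝ) volume :=
    ⟨fun g s hs => measure_preimage_add volume (g : Fin n → ℝ) s⟩
  have hfd2 : IsAddFundamentalDomain ↥L
      (c +ᵥ Set.univ.pi fun _ : Fin n => Set.Ico (0:ℝ) (2*π)) volume :=
    hfd1.vadd_of_comm c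
  -- periodicity for all lattice elements
  have hinv : ∀ (g : ↥L) (x : Fin n → ℝ), f ((g : Fin n → ℝ) + x) = f x := by
    have key : ∀ g ∈ L, ∀ x : Fin n → ℝ, f (g + x) = f x := by
      set P : AddSubgroup (Fin n → ℝ) :=
        { carrier := {g | ∀ x, f (g + x) = f x}
          zero_mem' := by intro x; simp
          add_mem' := by
            intro g g' hg hg' x
            have := hg (g' + x)
            rw [← add_assoc] at this
            rw [this, hg']
          neg_mem' := by
            intro g hg x
            have := hg (-g + x)
            rw [← add_assoc, add_neg_cancel, zero_add] at this
            exact this.symm } with hP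
      intro g hg
      have : L ≤ AddSubgroup.toIntSubmodule P := by
        rw [hL, Submodule.span_le]
        rintro _ ⟨j, rfl⟩
        intro x
        show f (b j + x) = f x
        have hbj : b j = (2*π) • (Pi.single j 1 : Fin n → ℝ) := by
          rw [hb]
          simp only [Module.Basis.map_apply, Pi.basisFun_apply]
          rw [hfeap]
        rw [hbj, add_comm, hper]
      exact this hg
    exact fun g x => key (g : Fin n → ℝ) g.2 x
  have hIccIco : ((Set.univ.pi fun _ : Fin n => Set.Icc (0:ℝ) (2*π)) : Set (Fin n → ℝ))
      =ᵐ[volume] Set.univ.pi fun _ : Fin n => Set.Ico (0:ℝ) (2*π) := by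
    have h1 : ((Set.univ.pi fun _ : Fin n => Set.Ioo (0:ℝ) (2*π)) : Set (Fin n → ℝ))
        =ᵐ[volume] Set.univ.pi fun _ : Fin n => Set.Icc (0:ℝ) (2*π) :=
      MeasureTheory.Measure.pi_Ioo_ae_eq_pi_Icc
    rw [MeasureTheory.ae_eq_set] at h1 ⊢
    obtain ⟨-, h1b⟩ := h1
    constructor
    · refine measure_mono_null ?_ h1b
      intro x hx
      exact ⟨hx.1, fun hmem => hx.2 (fun i _ => ⟨le_of_lt (hmem i (Set.mem_univ i)).1, (hmem i (Set.mem_univ i)).2⟩)⟩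
    · have hsub : ((Set.univ.pi fun _ : Fin n => Set.Ico (0:ℝ) (2*π)) \
          (Set.univ.pi fun _ : Fin n => Set.Icc (0:ℝ) (2*π)) : Set (Fin n → ℝ)) = ∅ := by
        rw [Set.diff_eq_empty]
        intro x hx i hi
        exact ⟨(hx i hi).1, le_of_lt (hx i hi).2⟩
      rw [hsub]
      exact measure_empty
  calc (∫ θ in Set.univ.pi fun _ : Fin n => Set.Icc (0:ℝ) (2*π), f (c + θ))
      = ∫ θ in Set.univ.pi fun _ : Fin n => Set.Ico (0:ℝ) (2*π), f (c + θ) :=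
        MeasureTheory.setIntegral_congr_set hIccIco
    _ = ∫ θ in (fun θ => c + θ) ⁻¹' (c +ᵥ Set.univ.pi fun _ : Fin n => Set.Ico (0:ℝ) (2*π)), f (c + θ) := by
        congr 1
        have : ((fun θ : Fin n → ℝ => c + θ) ⁻¹' (c +ᵥ Set.univ.pi fun _ : Fin n => Set.Ico (0:ℝ) (2*π)))
            = (c +ᵥ ·) ⁻¹' ((c +ᵥ ·) '' (Set.univ.pi fun _ : Fin n => Set.Ico (0:ℝ) (2*π))) := by
          rw [← Set.image_vadd]
          rfl
        rw [this, Set.preimage_image_eq _ (fun a b hab => by simpa using hab)]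
    _ = ∫ θ in (c +ᵥ Set.univ.pi fun _ : Fin n => Set.Ico (0:ℝ) (2*π)), f θ :=
        (measurePreserving_add_left volume c).setIntegral_preimage_emb
          (MeasurableEquiv.addLeft c).measurableEmbedding f _
    _ = ∫ θ in Set.univ.pi fun _ : Fin n => Set.Ico (0:ℝ) (2*π), f θ :=
        hfd2.setIntegral_eq hfd1 (fun g x => hinv g x)
    _ = ∫ θ in Set.univ.pi fun _ : Fin n => Set.Icc (0:ℝ) (2*π), f θ :=
        (MeasureTheory.setIntegral_congr_set hIccIco).symm



lemma param_hasDerivAt {n : ℕ} (F : ℝ × (Fin n → ℝ) → ℝ) (hF : ContDiff ℝ 1 F) (r : ℝ) :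
    HasDerivAt (fun t => ∫ θ in Set.univ.pi fun _ : Fin n => Set.Icc (0:ℝ) (2*π), F (t, θ))
      (∫ θ in Set.univ.pi fun _ : Fin n => Set.Icc (0:ℝ) (2*π), fderiv ℝ F (r, θ) (1, 0)) r := by
  set T : Set (Fin n → ℝ) := Set.univ.pi fun _ : Fin n => Set.Icc (0:ℝ) (2*π) with hT
  have hTc : IsCompact T := isCompact_univ_pi fun _ => isCompact_Icc
  have hTm : MeasurableSet T := MeasurableSet.univ_pi fun _ => measurableSet_Icc
  set DF : ℝ × (Fin n → ℝ) → ℝ := fun p => fderiv ℝ F p (1, 0) with hDF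
  have hDFc : Continuous DF := (hF.continuous_fderiv one_ne_zero).clm_apply continuous_const
  have hK : IsCompact ((Set.Icc (r-1) (r+1)) ×ˢ T) := isCompact_Icc.prod hTc
  obtain ⟨C, hC⟩ := hK.exists_bound_of_continuousOn hDFc.continuousOn
  have main := hasDerivAt_integral_of_dominated_loc_of_deriv_le (μ := volume.restrict T)
    (F := fun t θ => F (t, θ)) (F' := fun t θ => DF (t, θ)) (x₀ := r)
    (bound := fun _ => C) (s := Metric.ball r 1) (Metric.ball_mem_nhds r one_pos)
    (Filter.Eventually.of_forall fun x =>
      ((hF.continuous.comp (Continuous.prodMk_right x)).aestronglyMeasurable))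
    ((hF.continuous.comp (Continuous.prodMk_right r)).continuousOn.integrableOn_compact hTc)
    ((hDFc.comp (Continuous.prodMk_right r)).aestronglyMeasurable)
    ?_ (integrableOn_const hTc.measure_lt_top.ne) ?_
  · exact main.2
  · filter_upwards [ae_restrict_mem hTm] with θ hθ
    intro x hx
    apply hC
    refine ⟨?_, hθ⟩
    have := Metric.mem_ball.1 hx
    rw [Real.dist_eq] at this
    constructor <;> [linarith [abs_lt.1 this |>.1]; linarith [abs_lt.1 this |>.2]]
  · filter_upwards [ae_restrict_mem hTm] with θ hθ
    intro x hx
    have h1 : HasFDerivAt F (fderiv ℝ F (x, θ)) (x, θ) :=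
      (hF.differentiable one_ne_zero (x, θ)).hasFDerivAt
    have h2 := h1.comp x (hasFDerivAt_prodMk_left (𝕜 := ℝ) x θ)
    have := h2.hasDerivAt
    simpa [Function.comp_def, hDF] using this


variable {n : ℕ}

/-- diagonal multiplication CLM -/
def diagCLM (n : ℕ) (m : Fin n → ℂ) : (Fin n → ℂ) →L[ℝ] (Fin n → ℂ) :=
  ContinuousLinearMap.pi fun j => m j • (ContinuousLinearMap.proj j : (Fin n → ℂ) →L[ℝ] ℂ)

@[simp] lemma diagCLM_apply (m v : Fin n → ℂ) (j : Fin n) :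
    diagCLM n m v j = m j * v j := by
  simp [diagCLM]

noncomputable def d2 {Z : Type*} [NormedAddCommGroup Z] [NormedSpace ℝ Z]
    (g : Z → ℝ) (w v : Z) : ℝ :=
  fderiv ℝ (fun y => fderiv ℝ g y v) w v

lemma contDiff_fderiv_apply {Z : Type*} [NormedAddCommGroup Z] [NormedSpace ℝ Z]
    {g : Z → ℝ} (hg : ContDiff ℝ 2 g) (v : Z) :
    ContDiff ℝ 1 (fun y => fderiv ℝ g y v) :=
  (ContinuousLinearMap.apply ℝ ℝ v).contDiff.comp (hg.fderiv_right (by norm_num))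

lemma hasFDerivAt_expMul (v : Fin n → ℂ) (w : Fin n → ℂ) :
    HasFDerivAt (fun y : Fin n → ℂ => fun j => Complex.exp (y j) * v j)
      (diagCLM n (fun j => Complex.exp (w j) * v j)) w := by
  rw [hasFDerivAt_pi']
  intro j
  have h1 : HasDerivAt (fun z : ℂ => Complex.exp z * v j) (Complex.exp (w j) * v j) (w j) :=
    (Complex.hasDerivAt_exp (w j)).mul_const (v j)
  have h2 := (h1.hasFDerivAt.restrictScalars ℝ).comp w
    ((ContinuousLinearMap.proj j : (Fin n → ℂ) →L[ℝ] ℂ).hasFDerivAt (x := w))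
  convert h2 using 1 <;> ext h <;> simp [mul_comm]

lemma hasFDerivAt_exp_half {Z : Type*} [NormedAddCommGroup Z] [NormedSpace ℝ Z]
    {ψ : Z → ℝ} (hψ : ContDiff ℝ 2 ψ) (y : Z) :
    HasFDerivAt (fun z => Real.exp (ψ z / 2))
      ((Real.exp (ψ y / 2) / 2) • fderiv ℝ ψ y) y := by
  have h1 : HasFDerivAt ψ (fderiv ℝ ψ y) y :=
    (hψ.differentiable two_ne_zero y).hasFDerivAt
  have h2 : HasFDerivAt (fun z => ψ z / 2) ((1/2 : ℝ) • fderiv ℝ ψ y) y := by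
    simpa [div_eq_inv_mul, smul_smul, Pi.smul_def] using h1.const_smul (1/2 : ℝ)
  have h3 := (Real.hasDerivAt_exp (ψ y / 2)).comp_hasFDerivAt y h2
  convert h3 using 1 <;> ext u <;> simp <;> ring

lemma d2_exp_half {Z : Type*} [NormedAddCommGroup Z] [NormedSpace ℝ Z]
    {ψ : Z → ℝ} (hψ : ContDiff ℝ 2 ψ) (w v : Z) :
    d2 (fun z => Real.exp (ψ z / 2)) w v =
      Real.exp (ψ w / 2) *
        ((fderiv ℝ ψ w v / 2) * (fderiv ℝ ψ w v / 2) + d2 ψ w v / 2) := by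
  have hfun : (fun y => fderiv ℝ (fun z => Real.exp (ψ z / 2)) y v)
      = fun y => Real.exp (ψ y / 2) / 2 * fderiv ℝ ψ y v := by
    funext y
    rw [(hasFDerivAt_exp_half hψ y).fderiv]
    simp
  unfold d2
  rw [hfun]
  set c : Z → ℝ := fun y => Real.exp (ψ y / 2) / 2 with hc
  set d : Z → ℝ := fun y => fderiv ℝ ψ y v with hd
  have hceq : c = fun y => (1/2 : ℝ) • Real.exp (ψ y / 2) := by
    funext y; simp [hc]; ring
  have hcD : HasFDerivAt c ((1/2 : ℝ) • ((Real.exp (ψ w / 2) / 2) • fderiv ℝ ψ w)) w := by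
    rw [hceq]; exact (hasFDerivAt_exp_half hψ w).const_smul (1/2 : ℝ)
  have hdD : HasFDerivAt d (fderiv ℝ d w) w :=
    (((contDiff_fderiv_apply hψ v).differentiable one_ne_zero) w).hasFDerivAt
  have hprod := hcD.fun_mul hdD
  rw [hprod.fderiv]
  simp only [ContinuousLinearMap.add_apply, ContinuousLinearMap.smul_apply, smul_eq_mul]
  have : fderiv ℝ d w v = d2 ψ w v := rfl
  rw [this]
  ring

lemma diagCLM_apply' (m v : Fin n → ℂ) : diagCLM n m v = fun j => m j * v j := by
  funext j; simp

def Emap (n : ℕ) : (Fin n → ℂ) → (Fin n → ℂ) := fun w j => Complex.exp (w j)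

lemma contDiff_Emap : ContDiff ℝ 2 (Emap n) :=
  contDiff_pi.mpr fun j => Complex.contDiff_exp.comp (contDiff_apply ℝ ℂ j)

lemma hasFDerivAt_Emap (y : Fin n → ℂ) :
    HasFDerivAt (Emap n) (diagCLM n (Emap n y)) y := by
  have := hasFDerivAt_expMul (fun _ => (1:ℂ)) y
  simp only [mul_one] at this
  exact this

lemma Emap_mem {S : Set (Fin n → ℂ)} (hS : S = {z | ∀ j, z j ≠ 0}) (w : Fin n → ℂ) :
    Emap n w ∈ S := by
  rw [hS]; exact fun j => Complex.exp_ne_zero _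

lemma isOpen_S {S : Set (Fin n → ℂ)} (hS : S = {z | ∀ j, z j ≠ 0}) : IsOpen S := by
  rw [hS]
  have : {z : Fin n → ℂ | ∀ j, z j ≠ 0} = ⋂ j, {z : Fin n → ℂ | z j = 0}ᶜ := by
    ext z; simp
  rw [this]
  exact isOpen_iInter_of_finite fun j =>
    (isClosed_eq (continuous_apply j) continuous_const).isOpen_compl

-- conversion of the Levi form to global second derivatives
lemma levi_eq {S : Set (Fin n → ℂ)} (hS : S = {z | ∀ j, z j ≠ 0})
    {f : (Fin n → ℂ) → ℝ} {p : (Fin n → ℂ)} (hp : p ∈ S) (v : Fin n → ℂ) :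
    leviFormWithin n f S p v = (1/4) * (fderiv ℝ (fderiv ℝ f) p v v +
      fderiv ℝ (fderiv ℝ f) p (Complex.I • v) (Complex.I • v)) := by
  have hop := isOpen_S hS
  have hkey : ∀ u : Fin n → ℂ, iteratedFDerivWithin ℝ 2 f S p ![u, u]
      = fderiv ℝ (fderiv ℝ f) p u u := by
    intro u
    rw [iteratedFDerivWithin_two_apply f hop.uniqueDiffOn hp]
    have h1 : fderivWithin ℝ (fderivWithin ℝ f S) S p = fderivWithin ℝ (fderiv ℝ f) S p :=
      fderivWithin_congr (fun x hx => fderivWithin_of_isOpen hop hx)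
        (fderivWithin_of_isOpen hop hp)
    rw [h1, fderivWithin_of_isOpen hop hp]
    simp
  rw [leviFormWithin, hkey, hkey]

-- chain rule for composition with Emap
lemma d2_comp_Emap {S : Set (Fin n → ℂ)} (hS : S = {z | ∀ j, z j ≠ 0})
    {f : (Fin n → ℂ) → ℝ} (hf : ∀ z ∈ S, ContDiffAt ℝ 2 f z) (w v : Fin n → ℂ) :
    d2 (fun y => f (Emap n y)) w v =
      fderiv ℝ (fderiv ℝ f) (Emap n w) (fun j => Emap n w j * v j) (fun j => Emap n w j * v j)
        + fderiv ℝ f (Emap n w) (fun j => Emap n w j * v j * v j) := by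
  have hmem : ∀ y, Emap n y ∈ S := Emap_mem hS
  have hfd : ∀ y : Fin n → ℂ, fderiv ℝ (fun z => f (Emap n z)) y =
      (fderiv ℝ f (Emap n y)).comp (diagCLM n (Emap n y)) := by
    intro y
    exact (((hf _ (hmem y)).differentiableAt two_ne_zero).hasFDerivAt.comp y
      (hasFDerivAt_Emap y)).fderiv
  have hinner : (fun y => fderiv ℝ (fun z => f (Emap n z)) y v)
      = fun y => (fderiv ℝ f (Emap n y)) (fun j => Emap n y j * v j) := by
    funext y
    rw [hfd y]
    simp only [ContinuousLinearMap.comp_apply]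
    rw [diagCLM_apply']
  unfold d2
  rw [hinner]
  -- differentiate y ↦ (fderiv f (E y)) (u y)
  have hf2 : HasFDerivAt (fderiv ℝ f) (fderiv ℝ (fderiv ℝ f) (Emap n w)) (Emap n w) := by
    have h := (hf _ (hmem w)).fderiv_right (m := 1) (by norm_num)
    exact (h.differentiableAt one_ne_zero).hasFDerivAt
  have hcD : HasFDerivAt (fun y => fderiv ℝ f (Emap n y))
      ((fderiv ℝ (fderiv ℝ f) (Emap n w)).comp (diagCLM n (Emap n w))) w :=
    hf2.comp w (hasFDerivAt_Emap w)
  have huD : HasFDerivAt (fun y => fun j => Emap n y j * v j)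
      (diagCLM n fun j => Emap n w j * v j) w := hasFDerivAt_expMul v w
  have := (hcD.clm_apply huD).fderiv
  rw [this]
  simp only [ContinuousLinearMap.add_apply, ContinuousLinearMap.comp_apply,
    ContinuousLinearMap.flip_apply]
  rw [diagCLM_apply', diagCLM_apply']
  ring

lemma levi_key {S : Set (Fin n → ℂ)} (hS : S = {z | ∀ j, z j ≠ 0})
    {H : (Fin n → ℂ) → ℝ} (hHpos : ∀ z ∈ S, 0 < H z) (hC2 : ContDiffOn ℝ 2 H S)
    (hlogPSH : PlurisubharmonicOn n (fun z => Real.log (H z)) S)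
    (w : Fin n → ℂ) (a : Fin n → ℝ) :
    0 ≤ d2 (fun y => Real.sqrt (H (Emap n y))) w (fun j => (a j : ℂ))
      + d2 (fun y => Real.sqrt (H (Emap n y))) w (fun j => (a j : ℂ) * Complex.I) := by
  have hop := isOpen_S hS
  have hmem : ∀ y : Fin n → ℂ, Emap n y ∈ S := Emap_mem hS
  have hf : ∀ z ∈ S, ContDiffAt ℝ 2 (fun z => Real.log (H z)) z := fun z hz =>
    (Real.contDiffAt_log.mpr (hHpos z hz).ne').comp z (hC2.contDiffAt (hop.mem_nhds hz))
  set ψ : (Fin n → ℂ) → ℝ := fun y => Real.log (H (Emap n y)) with hψdef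
  have hψ : ContDiff ℝ 2 ψ := contDiff_iff_contDiffAt.mpr fun y =>
    (hf _ (hmem y)).comp y contDiff_Emap.contDiffAt
  have hQeq : (fun y : Fin n → ℂ => Real.sqrt (H (Emap n y))) = fun y => Real.exp (ψ y / 2) := by
    funext y
    have hx := hHpos _ (hmem y)
    rw [Real.sqrt_eq_rpow, Real.rpow_def_of_pos hx]
    congr 1
    rw [hψdef]
    ring
  set va : Fin n → ℂ := fun j => (a j : ℂ) with hva
  set vb : Fin n → ℂ := fun j => (a j : ℂ) * Complex.I with hvb
  have key : 0 ≤ d2 ψ w va + d2 ψ w vb := by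
    have k1 := d2_comp_Emap (f := fun z => Real.log (H z)) hS hf w va
    have k2 := d2_comp_Emap (f := fun z => Real.log (H z)) hS hf w vb
    rw [hψdef]
    rw [k1, k2]
    have hneg : (fun j => Emap n w j * vb j * vb j) = fun j => -(Emap n w j * va j * va j) := by
      funext j
      rw [hvb, hva]
      linear_combination (Emap n w j * (a j : ℂ) * (a j : ℂ)) * Complex.I_mul_I
    have hb : (fun j => Emap n w j * vb j) = Complex.I • (fun j => Emap n w j * va j) := by
      funext j
      simp only [Pi.smul_apply, smul_eq_mul, hvb, hva]
      ring
    rw [hneg, hb]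
    have hmapneg : (fderiv ℝ (fun z => Real.log (H z)) (Emap n w))
        (fun j => -(Emap n w j * va j * va j))
        = -((fderiv ℝ (fun z => Real.log (H z)) (Emap n w)) (fun j => Emap n w j * va j * va j)) := by
      rw [show (fun j => -(Emap n w j * va j * va j)) = -(fun j => Emap n w j * va j * va j) from rfl,
        map_neg]
    rw [hmapneg]
    have levi := hlogPSH _ (hmem w) (fun j => Emap n w j * va j)
    rw [levi_eq hS (hmem w)] at levi
    linarith
  rw [hQeq, d2_exp_half hψ, d2_exp_half hψ]
  nlinarith [key, Real.exp_pos (ψ w / 2),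
    mul_self_nonneg (fderiv ℝ ψ w va / 2), mul_self_nonneg (fderiv ℝ ψ w vb / 2)]

section affine
variable {W Z : Type*} [NormedAddCommGroup W] [NormedSpace ℝ W]
  [NormedAddCommGroup Z] [NormedSpace ℝ Z]

lemma fderiv_affine_comp (Q : Z → ℝ) (hQ : ContDiff ℝ 2 Q) (c0 : Z) (ℓ : W →L[ℝ] Z) (p : W) :
    fderiv ℝ (fun q => Q (c0 + ℓ q)) p = (fderiv ℝ Q (c0 + ℓ p)).comp ℓ := by
  have hL : HasFDerivAt (fun q : W => c0 + ℓ q) ℓ p := ℓ.hasFDerivAt.const_add c0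
  exact ((hQ.differentiable two_ne_zero _).hasFDerivAt.comp p hL).fderiv

lemma p1p1_affine (Q : Z → ℝ) (hQ : ContDiff ℝ 2 Q) (c0 : Z) (ℓ : W →L[ℝ] Z) (p e : W) :
    fderiv ℝ (fun q => fderiv ℝ (fun q' => Q (c0 + ℓ q')) q e) p e = d2 Q (c0 + ℓ p) (ℓ e) := by
  have h1 : (fun q => fderiv ℝ (fun q' => Q (c0 + ℓ q')) q e)
      = fun q => fderiv ℝ Q (c0 + ℓ q) (ℓ e) := by
    funext q
    rw [fderiv_affine_comp Q hQ c0 ℓ q]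
    rfl
  rw [h1]
  have hg : ContDiff ℝ 1 (fun y => fderiv ℝ Q y (ℓ e)) := contDiff_fderiv_apply hQ (ℓ e)
  have hL : HasFDerivAt (fun q : W => c0 + ℓ q) ℓ p := ℓ.hasFDerivAt.const_add c0
  have hcomp : HasFDerivAt (fun q => fderiv ℝ Q (c0 + ℓ q) (ℓ e))
      ((fderiv ℝ (fun y => fderiv ℝ Q y (ℓ e)) (c0 + ℓ p)).comp ℓ) p :=
    ((hg.differentiable one_ne_zero _).hasFDerivAt.comp p hL)
  rw [hcomp.fderiv]
  rfl

end affine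

def lineCLM (n : ℕ) (d : Fin n → ℂ) : (ℝ × (Fin n → ℝ)) →L[ℝ] (Fin n → ℂ) :=
  ContinuousLinearMap.pi fun j =>
    (ContinuousLinearMap.fst ℝ ℝ (Fin n → ℝ)).smulRight (d j) +
    ((ContinuousLinearMap.proj j).comp (ContinuousLinearMap.snd ℝ ℝ (Fin n → ℝ))).smulRight Complex.I

@[simp] lemma lineCLM_apply (d : Fin n → ℂ) (p : ℝ × (Fin n → ℝ)) (j : Fin n) :
    lineCLM n d p j = p.1 • d j + (p.2 j) • Complex.I := by
  simp [lineCLM]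

lemma contDiff_Q {S : Set (Fin n → ℂ)} (hS : S = {z | ∀ j, z j ≠ 0})
    {H : (Fin n → ℂ) → ℝ} (hHpos : ∀ z ∈ S, 0 < H z) (hC2 : ContDiffOn ℝ 2 H S) :
    ContDiff ℝ 2 (fun y : Fin n → ℂ => Real.sqrt (H (Emap n y))) := by
  have hop := isOpen_S hS
  have hmem : ∀ y : Fin n → ℂ, Emap n y ∈ S := Emap_mem hS
  refine contDiff_iff_contDiffAt.mpr fun y => ?_
  exact (Real.contDiffAt_sqrt (hHpos _ (hmem y)).ne').comp y
    ((hC2.contDiffAt (hop.mem_nhds (hmem y))).comp y contDiff_Emap.contDiffAt)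

lemma line_convex {S : Set (Fin n → ℂ)} (hS : S = {z | ∀ j, z j ≠ 0})
    {H : (Fin n → ℂ) → ℝ} (hHpos : ∀ z ∈ S, 0 < H z) (hC2 : ContDiffOn ℝ 2 H S)
    (hlogPSH : PlurisubharmonicOn n (fun z => Real.log (H z)) S) (x0 aD : Fin n → ℝ) :
    ConvexOn ℝ Set.univ (fun t : ℝ =>
      ∫ θ in Set.univ.pi fun _ : Fin n => Set.Icc (0:ℝ) (2*π),
        Real.sqrt (H fun j => Complex.exp ((((x0 + t • aD) j : ℝ) : ℂ) + (θ j : ℂ) * Complex.I))) := by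
  set T : Set (Fin n → ℝ) := Set.univ.pi fun _ : Fin n => Set.Icc (0:ℝ) (2*π) with hT
  have hTc : IsCompact T := isCompact_univ_pi fun _ => isCompact_Icc
  have hTm : MeasurableSet T := MeasurableSet.univ_pi fun _ => measurableSet_Icc
  set Q : (Fin n → ℂ) → ℝ := fun y => Real.sqrt (H (Emap n y)) with hQdef
  have hQ : ContDiff ℝ 2 Q := contDiff_Q hS hHpos hC2
  set ℓ1 : (ℝ × (Fin n → ℝ)) →L[ℝ] (Fin n → ℂ) := lineCLM n (fun j => (aD j : ℂ)) with hℓ1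
  set c0 : Fin n → ℂ := fun j => ((x0 j : ℝ) : ℂ) with hc0
  set F1 : ℝ × (Fin n → ℝ) → ℝ := fun p => Q (c0 + ℓ1 p) with hF1def
  have hF1 : ContDiff ℝ 2 F1 := hQ.comp (contDiff_const.add ℓ1.contDiff)
  have hmatch : ∀ (t : ℝ) (θ : Fin n → ℝ),
      Real.sqrt (H fun j => Complex.exp ((((x0 + t • aD) j : ℝ) : ℂ) + (θ j : ℂ) * Complex.I))
        = F1 (t, θ) := by
    intro t θ
    rw [hF1def, hQdef]
    congr 1
    apply congrArg
    funext j
    show Complex.exp _ = Complex.exp ((c0 + ℓ1 (t, θ)) j)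
    congr 1
    simp only [Pi.add_apply, hc0, hℓ1, lineCLM_apply, Complex.real_smul, Pi.smul_apply,
      smul_eq_mul]
    push_cast
    ring
  -- the function of t
  set g : ℝ → ℝ := fun t => ∫ θ in T, F1 (t, θ) with hg
  have hgeq : (fun t : ℝ =>
      ∫ θ in T, Real.sqrt (H fun j => Complex.exp ((((x0 + t • aD) j : ℝ) : ℂ) + (θ j : ℂ) * Complex.I)))
      = g := by
    funext t
    rw [hg]
    exact integral_congr_ae (Filter.Eventually.of_forall fun θ => hmatch t θ)
  rw [hgeq]
  -- first and second derivatives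
  have hD1 : ∀ r : ℝ, HasDerivAt g (∫ θ in T, fderiv ℝ F1 (r, θ) (1, 0)) r :=
    fun r => param_hasDerivAt F1 (hF1.of_le one_le_two) r
  have hD2 : ∀ r : ℝ, HasDerivAt (fun t => ∫ θ in T, fderiv ℝ F1 (t, θ) (1, 0))
      (∫ θ in T, fderiv ℝ (fun p => fderiv ℝ F1 p (1, 0)) (r, θ) (1, 0)) r :=
    fun r => param_hasDerivAt _ (contDiff_fderiv_apply hF1 (1, 0)) r
  -- nonnegativity of the second derivative
  have hnonneg : ∀ r : ℝ, 0 ≤ ∫ θ in T, fderiv ℝ (fun p => fderiv ℝ F1 p (1, 0)) (r, θ) (1, 0) := by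
    intro r
    set ℓ2 : (ℝ × (Fin n → ℝ)) →L[ℝ] (Fin n → ℂ) := lineCLM n (fun j => (aD j : ℂ) * Complex.I) with hℓ2
    set c1 : Fin n → ℂ := fun j => (((x0 + r • aD) j : ℝ) : ℂ) with hc1
    set F2 : ℝ × (Fin n → ℝ) → ℝ := fun p => Q (c1 + ℓ2 p) with hF2def
    have hF2 : ContDiff ℝ 2 F2 := hQ.comp (contDiff_const.add ℓ2.contDiff)
    -- F2 is obtained from F2 (0, ·) by a θ-translation
    have hshift : ∀ (s : ℝ) (θ : Fin n → ℝ), F2 (s, θ) = F2 (0, s • aD + θ) := by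
      intro s θ
      simp only [hF2def]
      apply congrArg
      funext j
      simp only [Pi.add_apply, hc1, hℓ2, lineCLM_apply, Complex.real_smul, Pi.smul_apply,
        smul_eq_mul]
      push_cast
      ring
    -- periodicity of F2 (0, ·)
    have hper : ∀ (j : Fin n) (θ : Fin n → ℝ),
        F2 (0, θ + (2 * π) • (Pi.single j 1 : Fin n → ℝ)) = F2 (0, θ) := by
      intro j θ
      simp only [hF2def]
      have harg : c1 + ℓ2 (0, θ + (2 * π) • (Pi.single j 1 : Fin n → ℝ))
          = fun j' => c1 j' + ℓ2 (0, θ) j' + (if j' = j then (2*π*Complex.I) else 0) := by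
        funext j'
        simp only [Pi.add_apply, hℓ2, lineCLM_apply, Complex.real_smul, Pi.smul_apply,
          smul_eq_mul]
        by_cases hjj : j' = j
        · subst hjj
          rw [Pi.single_eq_same, if_pos rfl]
          push_cast
          ring
        · rw [Pi.single_eq_of_ne hjj, if_neg hjj]
          push_cast
          ring
      have harg2 : Emap n (c1 + ℓ2 (0, θ + (2 * π) • (Pi.single j 1 : Fin n → ℝ)))
          = Emap n (c1 + ℓ2 (0, θ)) := by
        rw [harg]
        funext j'
        show Complex.exp (c1 j' + ℓ2 (0, θ) j' + (if j' = j then (2*(π:ℂ)*Complex.I) else 0))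
          = Complex.exp ((c1 + ℓ2 (0, θ)) j')
        by_cases hjj : j' = j
        · rw [if_pos hjj, Complex.exp_add, Complex.exp_two_pi_mul_I, mul_one]
          rfl
        · rw [if_neg hjj, add_zero]
          rfl
      simp only [hQdef]
      rw [harg2]
    -- the integral of F2 (s, ·) over T does not depend on s
    have hconst : ∀ s : ℝ, (∫ θ in T, F2 (s, θ)) = ∫ θ in T, F2 (0, θ) := by
      intro s
      have h1 : (∫ θ in T, F2 (s, θ)) = ∫ θ in T, F2 (0, s • aD + θ) :=
        integral_congr_ae (Filter.Eventually.of_forall fun θ => hshift s θ)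
      rw [h1, hT]
      exact box_translate (fun θ => F2 (0, θ)) (fun j θ => hper j θ) (s • aD)
    -- hence the s-derivatives of the integral vanish
    have hD1' : ∀ s : ℝ, HasDerivAt (fun s => ∫ θ in T, F2 (s, θ))
        (∫ θ in T, fderiv ℝ F2 (s, θ) (1, 0)) s :=
      fun s => param_hasDerivAt F2 (hF2.of_le one_le_two) s
    have hzero1 : ∀ s : ℝ, (∫ θ in T, fderiv ℝ F2 (s, θ) (1, 0)) = 0 := by
      intro s
      have hcf : (fun s => ∫ θ in T, F2 (s, θ)) = fun _ => ∫ θ in T, F2 (0, θ) :=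
        funext hconst
      have : HasDerivAt (fun s => ∫ θ in T, F2 (s, θ)) 0 s := by
        rw [hcf]; exact hasDerivAt_const s _
      exact (hD1' s).unique this
    have hD2' : HasDerivAt (fun s => ∫ θ in T, fderiv ℝ F2 (s, θ) (1, 0))
        (∫ θ in T, fderiv ℝ (fun p => fderiv ℝ F2 p (1, 0)) (0, θ) (1, 0)) 0 :=
      param_hasDerivAt _ (contDiff_fderiv_apply hF2 (1, 0)) 0
    have hzero2 : (∫ θ in T, fderiv ℝ (fun p => fderiv ℝ F2 p (1, 0)) (0, θ) (1, 0)) = 0 := by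
      have hcf : (fun s => ∫ θ in T, fderiv ℝ F2 (s, θ) (1, 0)) = fun _ => (0:ℝ) :=
        funext hzero1
      have : HasDerivAt (fun s => ∫ θ in T, fderiv ℝ F2 (s, θ) (1, 0)) 0 0 := by
        rw [hcf]; exact hasDerivAt_const 0 _
      exact hD2'.unique this
    -- identify the two integrands with d2 Q
    have hid1 : ∀ θ : Fin n → ℝ, fderiv ℝ (fun p => fderiv ℝ F1 p (1, 0)) (r, θ) (1, 0)
        = d2 Q (c0 + ℓ1 (r, θ)) (fun j => (aD j : ℂ)) := by
      intro θ
      simp only [hF1def]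
      rw [p1p1_affine Q hQ c0 ℓ1 (r, θ) (1, 0)]
      congr 1
      funext j
      simp [hℓ1, lineCLM_apply]
    have hid2 : ∀ θ : Fin n → ℝ, fderiv ℝ (fun p => fderiv ℝ F2 p (1, 0)) (0, θ) (1, 0)
        = d2 Q (c0 + ℓ1 (r, θ)) (fun j => (aD j : ℂ) * Complex.I) := by
      intro θ
      simp only [hF2def]
      rw [p1p1_affine Q hQ c1 ℓ2 (0, θ) (1, 0)]
      have hbase : c1 + ℓ2 (0, θ) = c0 + ℓ1 (r, θ) := by
        funext j
        simp only [Pi.add_apply, hc1, hc0, hℓ1, hℓ2, lineCLM_apply, Complex.real_smul,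
          Pi.smul_apply, smul_eq_mul]
        push_cast
        ring
      rw [hbase]
      congr 1
      funext j
      simp [hℓ2, lineCLM_apply]
    -- integrability
    have hcont1 : Continuous (fun p => fderiv ℝ (fun p => fderiv ℝ F1 p (1, 0)) p (1, 0)) :=
      (((contDiff_fderiv_apply hF1 (1, 0)).continuous_fderiv one_ne_zero).clm_apply continuous_const)
    have hcont2 : Continuous (fun p => fderiv ℝ (fun p => fderiv ℝ F2 p (1, 0)) p (1, 0)) :=
      (((contDiff_fderiv_apply hF2 (1, 0)).continuous_fderiv one_ne_zero).clm_apply continuous_const)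
    have hint1 : IntegrableOn (fun θ => fderiv ℝ (fun p => fderiv ℝ F1 p (1, 0)) (r, θ) (1, 0)) T :=
      ((hcont1.comp (Continuous.prodMk_right r)).continuousOn).integrableOn_compact hTc
    have hint2 : IntegrableOn (fun θ => fderiv ℝ (fun p => fderiv ℝ F2 p (1, 0)) (0, θ) (1, 0)) T :=
      ((hcont2.comp (Continuous.prodMk_right 0)).continuousOn).integrableOn_compact hTc
    have hsum : 0 ≤ ∫ θ in T, (fderiv ℝ (fun p => fderiv ℝ F1 p (1, 0)) (r, θ) (1, 0)
        + fderiv ℝ (fun p => fderiv ℝ F2 p (1, 0)) (0, θ) (1, 0)) := by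
      apply setIntegral_nonneg hTm
      intro θ _
      rw [hid1 θ, hid2 θ]
      exact levi_key hS hHpos hC2 hlogPSH (c0 + ℓ1 (r, θ)) aD
    rw [integral_add hint1 hint2, hzero2, add_zero] at hsum
    exact hsum
  -- convexity from the second derivative
  have hderiv : deriv g = fun r => ∫ θ in T, fderiv ℝ F1 (r, θ) (1, 0) :=
    funext fun r => (hD1 r).deriv
  apply convexOn_of_deriv2_nonneg convex_univ
  · have hdiff : Differentiable ℝ g := fun t => (hD1 t).differentiableAt
    exact hdiff.continuous.continuousOn
  · exact fun t _ => ((hD1 t).differentiableAt).differentiableWithinAt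
  · intro t _
    rw [hderiv]
    exact ((hD2 t).differentiableAt).differentiableWithinAt
  · intro t _
    have : deriv^[2] g t = deriv (deriv g) t := rfl
    rw [this, hderiv]
    rw [(hD2 t).deriv]
    exact hnonneg t


end

/-- If the squared-norm function `H` of the anti-canonical section on `(ℂ*)ⁿ` has
plurisubharmonic logarithm (i.e. the curvature `ρ = i∂∂̄(−log H)` is non-positive),
then the `J`-volume `V(x) = ∫_{[0,2π]ⁿ} √H(e^{x+iθ}) dθ` of the canonical `n`-tori
is a convex function of `x ∈ ℝⁿ`. -/
theorem jvolume_convex_of_nonpositive_curvature (n : ℕ)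
    (S : Set (Fin n → ℂ)) (hS : S = {z | ∀ j, z j ≠ 0})
    (H : (Fin n → ℂ) → ℝ)
    (hHpos : ∀ z ∈ S, 0 < H z)
    (hC2 : ContDiffOn ℝ 2 H S)
    (hlogPSH : PlurisubharmonicOn n (fun z => Real.log (H z)) S) :
    ConvexOn ℝ Set.univ (fun x : Fin n → ℝ =>
      ∫ θ in Set.univ.pi fun _ : Fin n => Set.Icc (0 : ℝ) (2 * Real.pi),
        Real.sqrt (H fun j => Complex.exp ((x j : ℂ) + (θ j : ℂ) * Complex.I))) := by
  constructor
  · exact convex_univ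
  · intro x _ y _ α β hα hβ hαβ
    obtain ⟨-, hcvx⟩ := line_convex hS hHpos hC2 hlogPSH x (y - x)
    have key := hcvx (Set.mem_univ (0:ℝ)) (Set.mem_univ (1:ℝ)) hα hβ hαβ
    have h0 : x + (0:ℝ) • (y - x) = x := by simp
    have h1 : x + (1:ℝ) • (y - x) = y := by simp
    beta_reduce at key
    simp only [smul_eq_mul, mul_zero, mul_one, zero_add] at key
    have hβ' : x + β • (y - x) = α • x + β • y := by
      have hα' : α = 1 - β := by linarith
      subst hα'
      module
    rw [hβ', h0, h1] at key
    simpa using key
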